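/- Dual (row) orthogonality: for partitions λ, μ ∈ Sh(d,c), (1/n^d) Σ_I S_λ(ζ^I)·conj(S_μ(ζ^I))·|Vand(ζ^I)|^2 = δ_{λ,μ}, where the sum runs over all d-element subsets I of the n-th roots of (-1)^{d+1}. -/

import Mathlib

noncomputable section
open scoped Classical

/-- Complete homogeneous symmetric polynomial of degree `m` in `d` variables. -/
def Hpoly (d m : ℕ) (z : Fin d → ℂ) : ℂ :=
  ∑ α ∈ Finset.Nat.antidiagonalTuple d m, ∏ i, z i ^ α i

/-- `H_k` for integer index `k` (zero for negative `k`). -/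
def HZ (d : ℕ) (z : Fin d → ℂ) (k : ℤ) : ℂ :=
  if 0 ≤ k then Hpoly d k.toNat z else 0

/-- Schur polynomial via the Jacobi–Trudi determinant `det(H_{λ_i - i + j})`. -/
def schur (d : ℕ) (lam : Fin d → ℕ) (z : Fin d → ℂ) : ℂ :=
  Matrix.det (Matrix.of fun i j : Fin d => HZ d z ((lam i : ℤ) + j - i))

/-- The partitions fitting in a `d × c` box, as weakly decreasing functions. -/
def box (d c : ℕ) : Finset (Fin d → Fin (c + 1)) :=
  Finset.univ.filter fun lam => ∀ i j : Fin d, i ≤ j → lam j ≤ lam i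

/-- Poincaré dual partition `PD(λ) = (c - λ_d, …, c - λ_1)`. -/
def PD (d c : ℕ) (lam : Fin d → ℕ) : Fin d → ℕ := fun i => c - lam i.rev

/-- Squared modulus of the Vandermonde determinant of a `d`-tuple. -/
def vandSq (d : ℕ) (z : Fin d → ℂ) : ℝ :=
  ‖∏ k : Fin d, ∏ j ∈ Finset.univ.filter (fun j : Fin d => k < j), (z k - z j)‖ ^ 2

/-- The `d`-tuple of `n`-th roots of `(-1)^{d+1}` selected by a strictly
monotone `K : Fin d → Fin n`: the `k`-th entry is `ε·ζ^{K k}` where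
`ζ = exp(2πi/n)` and `ε = exp(πi(d+1)/n)` is a fixed `n`-th root of `(-1)^{d+1}`. -/
def rootTup (d n : ℕ) (K : Fin d → Fin n) : Fin d → ℂ := fun k =>
  Complex.exp (Real.pi * Complex.I * (d + 1) / n) *
    Complex.exp (2 * Real.pi * Complex.I / n) ^ (K k : ℕ)

/-!
The alternant `a_α(z) = det (z_k ^ α_i)` factors as `a_{λ+ρ} = JT_λ · E` with `JT_λ` the
Jacobi–Trudi matrix, `E_{jk} = ± e_{d-1-j}(z without z_k)` and `ρ_i = d - 1 - i` (written `i.rev`);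
entrywise this is the coefficient identity behind `H(t) · ∏_{i ≠ k} (1 - z_i t) = 1 / (1 - z_k t)`.
Taking `λ = 0` identifies `det E` with the Vandermonde determinant, so each summand is
`a_{λ+ρ}(ζ^I) · conj a_{μ+ρ}(ζ^I)`. By Cauchy–Binet the sum over `I` is the determinant of the
`d × d` Gram matrix `∑_t w_t ^ (λ_i + ρ_i) · conj w_t ^ (μ_j + ρ_j)` over the roots `w_t = ε ζ^t`.
All exponents are `< n = c + d`, so orthogonality of the characters of `ℤ/n` makes this matrix
`n · [λ_i + ρ_i = μ_j + ρ_j]`, and its determinant is `n^d δ_{λμ}` because both exponent sequences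
are strictly decreasing.
-/

def esym {ι : Type*} (z : ι → ℂ) (s : Finset ι) (i : ℕ) : ℂ :=
  ∑ T ∈ s.powersetCard i, ∏ x ∈ T, z x

section SymmetricFunctions

variable {ι : Type*} (z : ι → ℂ)

@[simp]
lemma esym_zero (s : Finset ι) : esym z s 0 = 1 := by
  simp [esym]

lemma esym_eq_zero_of_card_lt {s : Finset ι} {i : ℕ} (h : s.card < i) : esym z s i = 0 := by
  simp [esym, Finset.powersetCard_eq_empty.2 h]

lemma esym_insert [DecidableEq ι] {x : ι} {s : Finset ι} (hx : x ∉ s) (i : ℕ) :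
    esym z (insert x s) (i + 1) = esym z s (i + 1) + z x * esym z s i := by
  rw [esym, esym, esym, Finset.powersetCard_succ_insert hx, Finset.sum_union,
    Finset.sum_image, Finset.mul_sum]
  · congr 1
    refine Finset.sum_congr rfl fun T hT => Finset.prod_insert fun hxT => hx ?_
    exact (Finset.mem_powersetCard.1 hT).1 hxT
  · intro T hT U hU hTU
    have hxT : x ∉ T := fun h => hx ((Finset.mem_powersetCard.1 hT).1 h)
    have hxU : x ∉ U := fun h => hx ((Finset.mem_powersetCard.1 hU).1 h)
    simpa [Finset.erase_insert, hxT, hxU] using congrArg (Finset.erase · x) hTU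
  · refine Finset.disjoint_right.2 fun T hT hT' => hx ?_
    obtain ⟨U, -, rfl⟩ := Finset.mem_image.1 hT
    exact (Finset.mem_powersetCard.1 hT').1 (Finset.mem_insert_self _ _)

lemma esym_map {κ : Type*} (g : κ ↪ ι) (s : Finset κ) (i : ℕ) :
    esym z (s.map g) i = esym (z ∘ g) s i := by
  simp only [esym, Finset.powersetCard_map, Finset.sum_map, Finset.mapEmbedding_apply,
    Finset.prod_map, Function.comp_apply, RelEmbedding.coe_toEmbedding]

lemma sum_esym_insert [DecidableEq ι] {x : ι} {s : Finset ι} (hx : x ∉ s) {m : ℕ}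
    (hm : s.card < m) (F : ℕ → ℂ) :
    ∑ i ∈ Finset.range (m + 1), (-1) ^ i * esym z (insert x s) i * F i =
      ∑ i ∈ Finset.range m, (-1) ^ i * esym z s i * (F i - z x * F (i + 1)) := by
  have hlast : ∑ i ∈ Finset.range (m + 1), (-1) ^ i * esym z s i * F i =
      ∑ i ∈ Finset.range m, (-1) ^ i * esym z s i * F i := by
    rw [Finset.sum_range_succ, esym_eq_zero_of_card_lt z hm]
    ring
  rw [Finset.sum_range_succ'] at hlast ⊢
  simp only [esym_insert z hx, esym_zero, pow_succ] at hlast ⊢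
  simp only [mul_sub, Finset.sum_sub_distrib]
  rw [← hlast, add_sub_right_comm, ← Finset.sum_sub_distrib]
  congr 1
  exact Finset.sum_congr rfl fun i _ => by ring

end SymmetricFunctions

lemma Hpoly_zero (d : ℕ) (z : Fin d → ℂ) : Hpoly d 0 z = 1 := by
  simp [Hpoly, Finset.Nat.antidiagonalTuple_zero_right]

lemma Hpoly_succ (d m : ℕ) (z : Fin (d + 1) → ℂ) :
    Hpoly (d + 1) m z =
      ∑ ab ∈ Finset.HasAntidiagonal.antidiagonal m, z 0 ^ ab.1 * Hpoly d ab.2 (Fin.tail z) := by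
  simp_rw [Hpoly, Finset.mul_sum]
  rw [Finset.sum_sigma']
  refine (Finset.sum_nbij' (fun p => Fin.cons p.1.1 p.2)
    (fun α => ⟨(α 0, ∑ i : Fin d, α i.succ), Fin.tail α⟩) ?_ ?_ ?_ ?_ ?_).symm
  · rintro ⟨⟨a, b⟩, β⟩ hp
    simp only [Finset.mem_sigma, Finset.HasAntidiagonal.mem_antidiagonal,
      Finset.Nat.mem_antidiagonalTuple] at hp ⊢
    rw [Fin.sum_univ_succ]
    simp only [Fin.cons_zero, Fin.cons_succ, hp.2, hp.1]
  · intro α hα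
    simp only [Finset.Nat.mem_antidiagonalTuple] at hα
    simp only [Finset.mem_sigma, Finset.HasAntidiagonal.mem_antidiagonal,
      Finset.Nat.mem_antidiagonalTuple]
    exact ⟨by rw [← hα, Fin.sum_univ_succ], rfl⟩
  · rintro ⟨⟨a, b⟩, β⟩ hp
    simp only [Finset.mem_sigma, Finset.HasAntidiagonal.mem_antidiagonal,
      Finset.Nat.mem_antidiagonalTuple] at hp
    refine Sigma.ext ?_ (heq_of_eq ?_)
    · simp only [Fin.cons_zero, Fin.cons_succ, hp.2]
    · simp
  · intro α _
    exact Fin.cons_self_tail α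
  · rintro ⟨⟨a, b⟩, β⟩ _
    simp only [Fin.prod_univ_succ, Fin.cons_zero, Fin.cons_succ]
    rfl

lemma HZ_of_neg (d : ℕ) (z : Fin d → ℂ) {N : ℤ} (h : N < 0) : HZ d z N = 0 := by
  simp [HZ, not_le.2 h]

lemma HZ_zero (d : ℕ) (z : Fin d → ℂ) : HZ d z 0 = 1 := by
  simp [HZ, Hpoly_zero]

lemma HZ_natCast (d m : ℕ) (z : Fin d → ℂ) : HZ d z m = Hpoly d m z := by
  simp [HZ]

lemma HZ_succ (d : ℕ) (z : Fin (d + 1) → ℂ) (N : ℤ) :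
    HZ (d + 1) z N = z 0 * HZ (d + 1) z (N - 1) + HZ d (Fin.tail z) N := by
  rcases lt_trichotomy N 0 with h | rfl | h
  · simp only [HZ_of_neg _ _ h, HZ_of_neg _ _ (show N - 1 < 0 by omega), mul_zero, add_zero]
  · simp [HZ_zero, HZ_of_neg]
  obtain ⟨m, rfl⟩ : ∃ m : ℕ, N = (m + 1 : ℕ) := ⟨(N - 1).toNat, by omega⟩
  rw [show ((m + 1 : ℕ) : ℤ) - 1 = m by push_cast; ring, HZ_natCast, HZ_natCast, HZ_natCast,
    Hpoly_succ, Hpoly_succ, Finset.Nat.antidiagonal_succ, Finset.sum_cons, Finset.sum_map,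
    Finset.mul_sum, pow_zero, one_mul, add_comm]
  congr 1
  refine Finset.sum_congr rfl fun ab _ => ?_
  simp only [Function.Embedding.prodMap, Function.Embedding.coeFn_mk, Prod.map,
    Function.Embedding.refl_apply, pow_succ]
  ring

lemma sum_esym_mul_HZ (d : ℕ) (z : Fin d → ℂ) (N : ℤ) :
    ∑ i ∈ Finset.range (d + 1), (-1) ^ i * esym z Finset.univ i * HZ d z (N - i) =
      if N = 0 then 1 else 0 := by
  induction d generalizing N with
  | zero =>
    simp only [zero_add, Finset.sum_range_one, pow_zero, esym_zero, one_mul, Nat.cast_zero,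
      sub_zero]
    rcases lt_trichotomy N 0 with h | rfl | h
    · rw [HZ_of_neg _ _ h, if_neg h.ne]
    · rw [HZ_zero, if_pos rfl]
    · obtain ⟨m, rfl⟩ : ∃ m : ℕ, N = (m + 1 : ℕ) := ⟨(N - 1).toNat, by omega⟩
      rw [HZ_natCast, if_neg (by omega)]
      simp [Hpoly]
  | succ d ih =>
    rw [Fin.univ_succ, Finset.cons_eq_insert, sum_esym_insert z (by simp) (by simp),
      ← ih (Fin.tail z) N]
    refine Finset.sum_congr rfl fun i _ => ?_
    rw [esym_map]
    change (-1) ^ i * esym (Fin.tail z) Finset.univ i * _ = _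
    rw [HZ_succ, show N - ((i + 1 : ℕ) : ℤ) = N - i - 1 by push_cast; ring]
    ring

lemma sum_esym_erase_mul_HZ (d : ℕ) (z : Fin d → ℂ) (k : Fin d) (m : ℕ) :
    ∑ j ∈ Finset.range d, (-1) ^ j * esym z (Finset.univ.erase k) j * HZ d z (m - j) =
      z k ^ m := by
  obtain ⟨S, hS⟩ : ∃ S : ℤ → ℂ, ∀ N, S N =
      ∑ j ∈ Finset.range d, (-1) ^ j * esym z (Finset.univ.erase k) j * HZ d z (N - j) :=
    ⟨_, fun _ => rfl⟩
  have hcard : (Finset.univ.erase k).card < d := by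
    rw [Finset.card_erase_of_mem (Finset.mem_univ _), Finset.card_univ, Fintype.card_fin]
    exact Nat.sub_lt k.pos one_pos
  have hrec : ∀ N, S N = z k * S (N - 1) + if N = 0 then 1 else 0 := by
    intro N
    rw [← sum_esym_mul_HZ d z N, ← Finset.insert_erase (Finset.mem_univ k),
      sum_esym_insert z (Finset.notMem_erase _ _) hcard, hS, hS, Finset.mul_sum,
      ← Finset.sum_add_distrib]
    refine Finset.sum_congr rfl fun j _ => ?_
    rw [show N - ((j + 1 : ℕ) : ℤ) = N - 1 - j by push_cast; ring]
    ring
  have hneg : S (-1) = 0 :=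
    (hS _).trans <| Finset.sum_eq_zero fun j _ => by rw [HZ_of_neg _ _ (by omega), mul_zero]
  rw [← hS]
  induction m with
  | zero => simpa [hneg] using hrec 0
  | succ m ih => rw [Nat.cast_succ, hrec, if_neg (by omega), add_zero, pow_succ', ← ih,
      add_sub_cancel_right]

def alternantMatrix {m ι R : Type*} [Monoid R] (e : m → ℕ) (z : ι → R) : Matrix m ι R :=
  Matrix.of fun i k => z k ^ e i

def esymMatrix (d : ℕ) (z : Fin d → ℂ) : Matrix (Fin d) (Fin d) ℂ :=
  Matrix.of fun j k => (-1) ^ (j.rev : ℕ) * esym z (Finset.univ.erase k) j.rev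

lemma alternantMatrix_eq_mul_esymMatrix (d : ℕ) (z : Fin d → ℂ) (lam : Fin d → ℕ) :
    alternantMatrix (fun i => lam i + (i.rev : ℕ)) z =
      Matrix.of (fun i j : Fin d => HZ d z ((lam i : ℤ) + j - i)) * esymMatrix d z := by
  ext i k
  rw [Matrix.mul_apply, ← Fintype.sum_equiv Fin.revPerm _ _ fun _ => rfl]
  simp only [alternantMatrix, esymMatrix, Matrix.of_apply, Fin.revPerm_apply, Fin.rev_rev]
  rw [← sum_esym_erase_mul_HZ d z k, ← Fin.sum_univ_eq_sum_range]
  refine Finset.sum_congr rfl fun j _ => ?_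
  rw [mul_comm]
  congr 2
  simp only [Fin.val_rev]
  omega

lemma schur_zero (d : ℕ) (z : Fin d → ℂ) : schur d (fun _ => 0) z = 1 := by
  rw [schur, Matrix.det_of_isUpperTriangular]
  · exact Finset.prod_eq_one fun i _ => by simp [HZ_zero]
  · intro i j (hij : j < i)
    exact HZ_of_neg _ _ (by simp only [Nat.cast_zero]; omega)

lemma det_alternantMatrix_add_rev (d : ℕ) (z : Fin d → ℂ) (lam : Fin d → ℕ) :
    (alternantMatrix (fun i => lam i + (i.rev : ℕ)) z).det =
      schur d lam z * (alternantMatrix (fun i : Fin d => (i.rev : ℕ)) z).det := by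
  have hrho : (alternantMatrix (fun i : Fin d => (i.rev : ℕ)) z).det = (esymMatrix d z).det := by
    have h := congrArg Matrix.det (alternantMatrix_eq_mul_esymMatrix d z fun _ => 0)
    rw [Matrix.det_mul, ← schur, schur_zero, one_mul] at h
    simpa only [zero_add] using h
  rw [hrho, alternantMatrix_eq_mul_esymMatrix, Matrix.det_mul, schur]

lemma norm_det_alternantMatrix_rev (d : ℕ) (z : Fin d → ℂ) :
    ‖(alternantMatrix (fun i : Fin d => (i.rev : ℕ)) z).det‖ =
      ‖∏ k : Fin d, ∏ j ∈ Finset.univ.filter (fun j : Fin d => k < j), (z k - z j)‖ := by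
  have hV : alternantMatrix (fun i : Fin d => (i.rev : ℕ)) z =
      (Matrix.vandermonde z).transpose.submatrix Fin.revPerm id := rfl
  rw [hV, Matrix.det_permute, Matrix.det_transpose, Matrix.det_vandermonde, norm_mul,
    Complex.norm_intCast, abs_unit_intCast, one_mul, norm_prod, norm_prod]
  refine Finset.prod_congr rfl fun i _ => ?_
  rw [norm_prod, norm_prod, Finset.filter_lt_eq_Ioi]
  exact Finset.prod_congr rfl fun j _ => norm_sub_rev _ _

lemma schur_mul_conj_schur_mul_vandSq (d : ℕ) (z : Fin d → ℂ) (lam mu : Fin d → ℕ) :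
    schur d lam z * starRingEnd ℂ (schur d mu z) * (vandSq d z : ℂ) =
      (alternantMatrix (fun i => lam i + (i.rev : ℕ)) z).det *
        starRingEnd ℂ (alternantMatrix (fun i => mu i + (i.rev : ℕ)) z).det := by
  have hV : (vandSq d z : ℂ) = (alternantMatrix (fun i : Fin d => (i.rev : ℕ)) z).det *
      starRingEnd ℂ (alternantMatrix (fun i : Fin d => (i.rev : ℕ)) z).det := by
    rw [Complex.mul_conj, ← Complex.sq_norm, norm_det_alternantMatrix_rev, vandSq]
  rw [det_alternantMatrix_add_rev, det_alternantMatrix_add_rev, map_mul, hV]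
  ring

section CauchyBinet

variable {R : Type*} [CommRing R] {ι : Type*} [Fintype ι]

lemma Matrix.det_mul_transpose_eq_sum {m : Type*} [Fintype m] [DecidableEq m]
    (P Q : Matrix m ι R) :
    (P * Q.transpose).det = ∑ K : m → ι, (P.submatrix id K).det * ∏ i, Q i (K i) := by
  simp only [Matrix.det_apply', Matrix.mul_apply, Matrix.transpose_apply, Finset.prod_univ_sum,
    Finset.mul_sum, Finset.sum_mul, Finset.prod_mul_distrib, Matrix.submatrix_apply, id]
  rw [Finset.sum_comm]
  exact Finset.sum_congr rfl fun K _ => Finset.sum_congr rfl fun σ _ => by ring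

lemma Finset.sum_injective_eq_sum_strictMono_sum_perm [LinearOrder ι] {M : Type*}
    [AddCommMonoid M] {d : ℕ} (F : (Fin d → ι) → M) :
    ∑ K ∈ Finset.univ.filter (fun K : Fin d → ι => Function.Injective K), F K =
      ∑ L ∈ Finset.univ.filter (fun L : Fin d → ι => StrictMono L),
        ∑ σ : Equiv.Perm (Fin d), F (L ∘ σ) := by
  rw [← Finset.sum_product']
  symm
  refine Finset.sum_nbij' (fun p => p.1 ∘ p.2)
    (fun K : Fin d → ι => (K ∘ Tuple.sort K, (Tuple.sort K)⁻¹)) ?_ ?_ ?_ ?_ fun _ _ => rfl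
  · rintro ⟨L, σ⟩ hp
    simp only [Finset.mem_product, Finset.mem_filter, Finset.mem_univ, true_and] at hp ⊢
    exact hp.1.injective.comp σ.injective
  · intro K hK
    simp only [Finset.mem_filter, Finset.mem_univ, true_and] at hK
    simp only [Finset.mem_product, Finset.mem_filter, Finset.mem_univ, true_and, and_true]
    exact (Tuple.monotone_sort K).strictMono_of_injective (hK.comp (Tuple.sort K).injective)
  · rintro ⟨L, σ⟩ hp
    simp only [Finset.mem_product, Finset.mem_filter, Finset.mem_univ, true_and,
      and_true] at hp
    have hsort : (L ∘ σ) ∘ Tuple.sort (L ∘ σ) = L := by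
      rw [Tuple.comp_perm_comp_sort_eq_comp_sort,
        Tuple.sort_eq_refl_iff_monotone.2 hp.monotone, Equiv.coe_refl, Function.comp_id]
    have hinv : (Tuple.sort (L ∘ σ))⁻¹ = σ := by
      rw [inv_eq_iff_eq_inv]
      exact Equiv.ext fun i => Equiv.Perm.eq_inv_iff_eq.2 (hp.injective (congrFun hsort i))
    simp [hsort, hinv]
  · intro K _
    funext i
    simp

theorem Matrix.det_mul_transpose_eq_sum_strictMono [LinearOrder ι] {d : ℕ}
    (P Q : Matrix (Fin d) ι R) :
    (P * Q.transpose).det = ∑ K ∈ Finset.univ.filter (fun K : Fin d → ι => StrictMono K),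
      (P.submatrix id K).det * (Q.submatrix id K).det := by
  have hinj : ∀ K : Fin d → ι, (P.submatrix id K).det * ∏ i, Q i (K i) ≠ 0 →
      Function.Injective K := by
    intro K hK
    by_contra hK'
    obtain ⟨i, j, hKij, hij⟩ := Function.not_injective_iff.1 hK'
    exact hK (by rw [Matrix.det_zero_of_column_eq hij fun k => by simp [hKij], zero_mul])
  rw [Matrix.det_mul_transpose_eq_sum,
    ← Finset.sum_filter_of_ne fun K _ => hinj K, Finset.sum_injective_eq_sum_strictMono_sum_perm]
  refine Finset.sum_congr rfl fun L _ => ?_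
  have hperm : ∀ σ : Equiv.Perm (Fin d), (P.submatrix id (L ∘ σ)).det =
      Equiv.Perm.sign σ * (P.submatrix id L).det := fun σ =>
    Matrix.det_permute' σ (P.submatrix id L)
  rw [← Matrix.det_transpose (Q.submatrix id L), Matrix.det_apply' (Q.submatrix id L).transpose,
    Finset.mul_sum]
  refine Finset.sum_congr rfl fun σ _ => ?_
  rw [hperm]
  simp only [Matrix.transpose_apply, Matrix.submatrix_apply, id, Function.comp_apply]
  ring

end CauchyBinet

lemma sum_pow_mul_conj_pow {n : ℕ} {ε ζ : ℂ} (hε : ‖ε‖ = 1) (hζ : IsPrimitiveRoot ζ n)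
    {a b : ℕ} (ha : a < n) (hb : b < n) :
    ∑ t : Fin n, (ε * ζ ^ (t : ℕ)) ^ a * starRingEnd ℂ (ε * ζ ^ (t : ℕ)) ^ b =
      if a = b then (n : ℂ) else 0 := by
  have hζ1 : ‖ζ‖ = 1 := hζ.norm'_eq_one (by omega)
  have hε0 : ε ≠ 0 := norm_ne_zero_iff.1 (by rw [hε]; exact one_ne_zero)
  have hζ0 : ζ ≠ 0 := norm_ne_zero_iff.1 (by rw [hζ1]; exact one_ne_zero)
  have hterm : ∀ t : ℕ, (ε * ζ ^ t) ^ a * starRingEnd ℂ (ε * ζ ^ t) ^ b =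
      (ε ^ a * ε⁻¹ ^ b) * (ζ ^ a * ζ⁻¹ ^ b) ^ t := by
    intro t
    rw [← Complex.inv_eq_conj (by rw [norm_mul, norm_pow, hε, hζ1, one_pow, one_mul])]
    ring
  rw [Fin.sum_univ_eq_sum_range (fun t => (ε * ζ ^ t) ^ a * starRingEnd ℂ (ε * ζ ^ t) ^ b)]
  simp_rw [hterm, ← Finset.mul_sum]
  split_ifs with hab
  · subst hab
    simp [mul_inv_cancel₀ (pow_ne_zero a hε0), mul_inv_cancel₀ (pow_ne_zero a hζ0)]
  · have hx : ζ ^ a * ζ⁻¹ ^ b ≠ 1 := by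
      rw [inv_pow, ← div_eq_mul_inv, Ne, div_eq_one_iff_eq (pow_ne_zero _ hζ0)]
      exact fun h => hab (hζ.pow_inj ha hb h)
    have hxn : (ζ ^ a * ζ⁻¹ ^ b) ^ n = 1 := by
      rw [mul_pow, ← pow_mul, ← pow_mul, mul_comm a, mul_comm b, pow_mul, pow_mul, inv_pow,
        hζ.pow_eq_one]
      simp
    rw [geom_sum_eq hx, hxn, sub_self, zero_div, mul_zero]

lemma Matrix.det_of_ite_eq_of_strictAnti {α R : Type*} [LinearOrder α] [CommRing R] {d : ℕ}
    {e f : Fin d → α} (he : StrictAnti e) (hf : StrictAnti f) (x : R) :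
    (Matrix.of fun i j => if e i = f j then x else 0).det = if e = f then x ^ d else 0 := by
  split_ifs with hef
  · subst hef
    have hdiag : (Matrix.of fun i j => if e i = e j then x else 0) =
        Matrix.diagonal fun _ => x := by
      ext i j
      simp [Matrix.diagonal_apply, he.injective.eq_iff]
    rw [hdiag, Matrix.det_diagonal, Finset.prod_const, Finset.card_univ, Fintype.card_fin]
  obtain ⟨i, hi⟩ : ∃ i, ∀ j, e i ≠ f j := by
    by_contra! h
    have hsub : Finset.univ.image e ⊆ Finset.univ.image f := by
      intro y hy
      obtain ⟨i, -, rfl⟩ := Finset.mem_image.1 hy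
      obtain ⟨j, hj⟩ := h i
      exact Finset.mem_image.2 ⟨j, Finset.mem_univ _, hj.symm⟩
    have himg := Finset.eq_of_subset_of_card_le hsub (by
      rw [Finset.card_image_of_injective _ he.injective,
        Finset.card_image_of_injective _ hf.injective])
    apply hef
    rw [← he.range_inj hf, ← Set.image_univ, ← Set.image_univ, ← Finset.coe_univ,
      ← Finset.coe_image, ← Finset.coe_image, himg]
  exact Matrix.det_eq_zero_of_row_eq_zero i fun j => by simp [hi j]

lemma strictAnti_add_rev_of_mem_box {c d : ℕ} {lam : Fin d → Fin (c + 1)}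
    (h : lam ∈ box d c) :
    StrictAnti fun i => (lam i : ℕ) + (i.rev : ℕ) :=
  Antitone.add_strictAnti (fun i j hij => (Finset.mem_filter.1 h).2 i j hij)
    (Fin.val_strictMono.comp_strictAnti Fin.rev_strictAnti)

theorem sum_det_alternantMatrix_mul_conj {R : Type*} [CommRing R] [StarRing R] {n d : ℕ}
    (w : Fin n → R) (hw : ∀ a b, a < n → b < n →
      ∑ t, w t ^ a * starRingEnd R (w t) ^ b = if a = b then (n : R) else 0)
    {e f : Fin d → ℕ} (he : StrictAnti e) (hf : StrictAnti f) (he_lt : ∀ i, e i < n)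
    (hf_lt : ∀ i, f i < n) :
    ∑ K ∈ Finset.univ.filter (fun K : Fin d → Fin n => StrictMono K),
        (alternantMatrix e (w ∘ K)).det * starRingEnd R (alternantMatrix f (w ∘ K)).det =
      if e = f then (n : R) ^ d else 0 := by
  have hgram : alternantMatrix e w * ((alternantMatrix f w).map (starRingEnd R)).transpose =
      Matrix.of fun i j => if e i = f j then (n : R) else 0 := by
    ext i j
    simp only [Matrix.mul_apply, Matrix.transpose_apply, Matrix.map_apply, alternantMatrix,
      Matrix.of_apply, map_pow]
    exact hw _ _ (he_lt i) (hf_lt j)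
  rw [← Matrix.det_of_ite_eq_of_strictAnti he hf, ← hgram,
    Matrix.det_mul_transpose_eq_sum_strictMono]
  refine Finset.sum_congr rfl fun K _ => ?_
  rw [RingHom.map_det]
  rfl

/-- Dual (row) orthogonality: for `λ, μ ∈ Sh(d,c)`,
`(1/n^d) ∑_I S_λ(ζ^I)·conj(S_μ(ζ^I))·|Vand(ζ^I)|² = δ_{λ,μ}`, the sum running
over all `d`-element subsets `I` of the `n`-th roots of `(-1)^{d+1}`. -/
theorem stmt12 (c d n : ℕ) (hn : n = c + d)
    (lam mu : Fin d → Fin (c + 1)) (hlam : lam ∈ box d c) (hmu : mu ∈ box d c) :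
    (1 / (n : ℂ) ^ d) *
        ∑ K ∈ Finset.univ.filter (fun K : Fin d → Fin n => StrictMono K),
          schur d (fun i => (lam i : ℕ)) (rootTup d n K) *
            (starRingEnd ℂ) (schur d (fun i => (mu i : ℕ)) (rootTup d n K)) *
            (vandSq d (rootTup d n K) : ℂ) =
      if lam = mu then 1 else 0 := by
  set ε := Complex.exp (Real.pi * Complex.I * (d + 1) / n)
  set w : Fin n → ℂ := fun t => ε * Complex.exp (2 * Real.pi * Complex.I / n) ^ (t : ℕ)
  have hroot : ∀ K : Fin d → Fin n, rootTup d n K = w ∘ K := fun _ => rfl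
  have hε : ‖ε‖ = 1 := by
    rw [Complex.norm_exp]
    simp
  have hw : ∀ a b, a < n → b < n → _ := fun a b ha hb =>
    sum_pow_mul_conj_pow hε (Complex.isPrimitiveRoot_exp n (by omega)) ha hb
  have hbound : ∀ (nu : Fin d → Fin (c + 1)) i, (nu i : ℕ) + (i.rev : ℕ) < n := by
    intro nu i
    have := (nu i).isLt
    have := i.rev.isLt
    omega
  have hef : (fun i : Fin d => (lam i : ℕ) + (i.rev : ℕ)) = (fun i => (mu i : ℕ) + i.rev) ↔
      lam = mu :=
    ⟨fun h => funext fun i => Fin.ext (Nat.add_right_cancel (congrFun h i)), fun h => h ▸ rfl⟩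
  have hnd : (n : ℂ) ^ d ≠ 0 := by
    rcases eq_or_ne n 0 with h0 | h0
    · obtain rfl : d = 0 := by omega
      exact one_ne_zero
    · exact pow_ne_zero _ (Nat.cast_ne_zero.2 h0)
  simp only [hroot, schur_mul_conj_schur_mul_vandSq]
  rw [sum_det_alternantMatrix_mul_conj w hw (strictAnti_add_rev_of_mem_box hlam)
    (strictAnti_add_rev_of_mem_box hmu) (hbound lam) (hbound mu)]
  by_cases h : lam = mu
  · rw [if_pos (hef.2 h), if_pos h, one_div_mul_cancel hnd]
  · rw [if_neg (mt hef.1 h), if_neg h, mul_zero]
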